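/- arXiv:2203.10148 — 3 statements merged into one kernel-verified Lean document; each statement's English description precedes it below -/
import Mathlib

section
/- The parareal recursion λ_{n+1}^{k+1} = G(λ_n^{k+1}) + F(λ_n^k) - G(λ_n^k), with λ_0^{k+1} = λ_0, is algebraically equivalent to the preconditioned Richardson iteration Λ^{k+1} = Λ^k + 𝓖^{-1}(B - 𝓕·Λ^k), where 𝓖 is the block bidiagonal matrix with identity on the diagonal and -G on the subdiagonal. -/
/-- Block bidiagonal matrix: identity on the diagonal, `-F` on the subdiagonal. -/
def blockBidiag {K V : Type*} [Field K] [AddCommGroup V] [Module K V]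
    (F : Module.End K V) (N : ℕ) : Matrix (Fin N) (Fin N) (Module.End K V) :=
  fun i j => if i = j then 1 else if (i : ℕ) = (j : ℕ) + 1 then -F else 0

/-- Inverse of the block bidiagonal matrix: `(i,j)` block is `G^(i-j)` for `i ≥ j`. -/
def blockInv {K V : Type*} [Field K] [AddCommGroup V] [Module K V]
    (G : Module.End K V) (N : ℕ) : Matrix (Fin N) (Fin N) (Module.End K V) :=
  fun i j => if (j : ℕ) ≤ (i : ℕ) then G ^ ((i : ℕ) - (j : ℕ)) else 0

/-- Action of a block matrix of endomorphisms on a vector in `V^N`. -/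
def act {K V : Type*} [Field K] [AddCommGroup V] [Module K V] {N : ℕ}
    (M : Matrix (Fin N) (Fin N) (Module.End K V)) (x : Fin N → V) : Fin N → V :=
  fun i => ∑ j, M i j (x j)


/-! Row `n + 1` of `𝓖⁻¹ r` is `G` applied to row `n` plus `r (n + 1)` (forward substitution),
and row `n + 1` of `𝓕 x` is `x (n + 1) - F (x n)`. Hence the Richardson update
`x ↦ x + 𝓖⁻¹ (B - 𝓕 x)` has first entry `λ₀` and satisfies the parareal recursion in `n`;
since a vector on `Fin N` is determined by its first entry and such a recursion, the two
iterations coincide. -/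

lemma Fin.funext_of_val_zero_of_succ {α : Type*} {N : ℕ} {x y : Fin N → α}
    (zero : ∀ i : Fin N, (i : ℕ) = 0 → x i = y i)
    (succ : ∀ (n : Fin N) (h : (n : ℕ) + 1 < N), x n = y n → x ⟨n + 1, h⟩ = y ⟨n + 1, h⟩) :
    x = y := by
  suffices ∀ m (hm : m < N), x ⟨m, hm⟩ = y ⟨m, hm⟩ from funext fun i => this i i.isLt
  intro m
  induction m with
  | zero => exact fun hm => zero _ rfl
  | succ m ih => exact fun hm => succ ⟨m, by omega⟩ hm (ih _)

section BlockBidiagonal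

variable {K V : Type*} [Field K] [AddCommGroup V] [Module K V] {N : ℕ}

lemma act_blockBidiag_of_val_eq_zero (F : Module.End K V) (x : Fin N → V) {i : Fin N}
    (hi : (i : ℕ) = 0) : act (blockBidiag F N) x i = x i := by
  rw [act, Finset.sum_eq_single i (fun j _ hj => by simp [blockBidiag, Ne.symm hj, hi])
    (by simp)]
  simp [blockBidiag]

lemma act_blockBidiag_succ (F : Module.End K V) (x : Fin N → V) (n : Fin N)
    (h : (n : ℕ) + 1 < N) :
    act (blockBidiag F N) x ⟨n + 1, h⟩ = x ⟨n + 1, h⟩ - F (x n) := by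
  have hne : (⟨n + 1, h⟩ : Fin N) ≠ n := Fin.ne_of_val_ne (by simp)
  rw [act, Fintype.sum_eq_add _ _ hne fun j hj => ?_]
  · simp [blockBidiag, hne, sub_eq_add_neg]
  · have : (n : ℕ) ≠ j := fun e => hj.2 (Fin.ext e.symm)
    simp [blockBidiag, Ne.symm hj.1, this]

lemma act_blockInv_of_val_eq_zero (G : Module.End K V) (r : Fin N → V) {i : Fin N}
    (hi : (i : ℕ) = 0) : act (blockInv G N) r i = r i := by
  rw [act, Finset.sum_eq_single i (fun j _ hj => ?_) (by simp)]
  · simp [blockInv]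
  · have : ¬ (j : ℕ) ≤ i := fun hj' => hj (Fin.ext (by omega))
    simp [blockInv, this]

lemma act_blockInv_succ (G : Module.End K V) (r : Fin N → V) (n : Fin N)
    (h : (n : ℕ) + 1 < N) :
    act (blockInv G N) r ⟨n + 1, h⟩ = G (act (blockInv G N) r n) + r ⟨n + 1, h⟩ := by
  have term : ∀ j : Fin N, blockInv G N ⟨n + 1, h⟩ j (r j) =
      G (blockInv G N n j (r j)) + if j = ⟨n + 1, h⟩ then r j else 0 := by
    intro j
    rcases lt_trichotomy (j : ℕ) (n + 1) with hj | hj | hj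
    · have hne : j ≠ ⟨n + 1, h⟩ := fun e => by simp [e] at hj
      have : (n : ℕ) + 1 - j = (n - j) + 1 := by omega
      simp [blockInv, hj.le, Nat.le_of_lt_succ hj, hne, this, pow_succ']
    · obtain rfl : j = ⟨n + 1, h⟩ := Fin.ext hj
      simp [blockInv]
    · have hne : j ≠ ⟨n + 1, h⟩ := fun e => by simp [e] at hj
      simp [blockInv, hj.not_ge, (Nat.lt_of_succ_lt hj).not_ge, hne]
  simp only [act, Finset.sum_congr rfl fun j _ => term j, Finset.sum_add_distrib, map_sum,
    Finset.sum_ite_eq', Finset.mem_univ, if_true]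

def richardsonStep (F G : Module.End K V) (lam0 : V) (x : Fin N → V) : Fin N → V :=
  x + act (blockInv G N)
    ((fun i : Fin N => if (i : ℕ) = 0 then lam0 else 0) - act (blockBidiag F N) x)

variable (F G : Module.End K V) (lam0 : V) (x : Fin N → V)

lemma richardsonStep_of_val_eq_zero {i : Fin N} (hi : (i : ℕ) = 0) :
    richardsonStep F G lam0 x i = lam0 := by
  simp [richardsonStep, act_blockInv_of_val_eq_zero G _ hi, act_blockBidiag_of_val_eq_zero F x hi,
    hi]

lemma richardsonStep_succ (n : Fin N) (h : (n : ℕ) + 1 < N) :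
    richardsonStep F G lam0 x ⟨n + 1, h⟩ =
      G (richardsonStep F G lam0 x n) + F (x n) - G (x n) := by
  simp only [richardsonStep, Pi.add_apply, act_blockInv_succ G _ n h, Pi.sub_apply,
    act_blockBidiag_succ F x n h, map_add, reduceCtorEq, if_false]
  abel

end BlockBidiagonal

theorem stmt2_general {K V : Type*} [Field K] [AddCommGroup V] [Module K V]
    (F G : Module.End K V) (N : ℕ) (lam0 : V)
    (Λ : ℕ → Fin N → V) :
    (∀ k : ℕ, (∀ n : Fin N, (n : ℕ) = 0 → Λ (k + 1) n = lam0) ∧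
        ∀ n : Fin N, ∀ h : (n : ℕ) + 1 < N,
          Λ (k + 1) ⟨(n : ℕ) + 1, h⟩ =
            G (Λ (k + 1) n) + F (Λ k n) - G (Λ k n)) ↔
      (∀ k : ℕ, Λ (k + 1) = Λ k +
          act (blockInv G N)
            ((fun i : Fin N => if (i : ℕ) = 0 then lam0 else 0) -
              act (blockBidiag F N) (Λ k))) := by
  change _ ↔ ∀ k, Λ (k + 1) = richardsonStep F G lam0 (Λ k)
  refine forall_congr' fun k => ⟨fun ⟨hzero, hsucc⟩ => ?_, fun hstep => ?_⟩
  · refine Fin.funext_of_val_zero_of_succ (fun i hi => ?_) fun n h ih => ?_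
    · rw [hzero i hi, richardsonStep_of_val_eq_zero F G lam0 _ hi]
    · rw [hsucc n h, richardsonStep_succ, ih]
  · rw [hstep]
    exact ⟨fun n hn => richardsonStep_of_val_eq_zero F G lam0 _ hn,
      fun n h => richardsonStep_succ F G lam0 _ n h⟩

/-- The parareal recursion `λ_{n+1}^{k+1} = G(λ_n^{k+1}) + F(λ_n^k) - G(λ_n^k)`,
`λ_0^{k+1} = λ_0`, is equivalent to the preconditioned Richardson iteration
`Λ^{k+1} = Λ^k + 𝓖⁻¹ (B - 𝓕 Λ^k)`. -/
theorem stmt2 {K V : Type*} [Field K] [AddCommGroup V] [Module K V]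
    (F G : Module.End K V) (N : ℕ) (hN : 1 ≤ N) (lam0 : V)
    (Λ : ℕ → Fin N → V)
    (h0 : ∀ n : Fin N, (n : ℕ) = 0 → Λ 0 n = lam0) :
    (∀ k : ℕ, (∀ n : Fin N, (n : ℕ) = 0 → Λ (k + 1) n = lam0) ∧
        ∀ n : Fin N, ∀ h : (n : ℕ) + 1 < N,
          Λ (k + 1) ⟨(n : ℕ) + 1, h⟩ =
            G (Λ (k + 1) n) + F (Λ k n) - G (Λ k n)) ↔
      (∀ k : ℕ, Λ (k + 1) = Λ k +
          act (blockInv G N)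
            ((fun i : Fin N => if (i : ℕ) = 0 then lam0 else 0) -
              act (blockBidiag F N) (Λ k))) :=
  stmt2_general F G N lam0 Λ
end

section
/- If ‖F - G‖ ≤ ε and ‖G‖ ≤ 1, then the parareal error satisfies ‖e_n^k‖ ≤ ε^k · C(n,k) · max_{0≤m≤N} ‖e_m^0‖, where C(n,k) is the binomial coefficient 'n choose k'. -/
/-!
The error of parareal obeys `e_{n+1}^{k+1} = G e_n^{k+1} + (F - G) e_n^k`, so with `‖G‖ ≤ 1` and
`‖F - G‖ ≤ ε` its norms satisfy `‖e_{n+1}^{k+1}‖ ≤ ‖e_n^{k+1}‖ + ε ‖e_n^k‖`, while `e_0^{k} = 0`.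
This is Pascal's rule up to the factor `ε`, so induction bounds `‖e_n^k‖` by `ε^k (n choose k)`
times the initial error.
-/

theorem le_pow_mul_choose_mul_of_le_add {a : ℕ → ℕ → ℝ} {ε M : ℝ} {N : ℕ} (hε : 0 ≤ ε)
    (hzero : ∀ k, a (k + 1) 0 ≤ 0) (hinit : ∀ n ≤ N, a 0 n ≤ M)
    (hstep : ∀ k n, a (k + 1) (n + 1) ≤ a (k + 1) n + ε * a k n) :
    ∀ k n, n ≤ N → a k n ≤ ε ^ k * n.choose k * M := by
  intro k
  induction k with
  | zero => simpa using hinit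
  | succ k ihk =>
    intro n
    induction n with
    | zero => simpa using hzero k
    | succ n ihn =>
      intro hn
      have hnN : n ≤ N := by omega
      calc a (k + 1) (n + 1) ≤ a (k + 1) n + ε * a k n := hstep k n
        _ ≤ ε ^ (k + 1) * n.choose (k + 1) * M + ε * (ε ^ k * n.choose k * M) := by
          gcongr
          exacts [ihn hnN, ihk n hnN]
        _ = ε ^ (k + 1) * (n + 1).choose (k + 1) * M := by
          rw [Nat.choose_succ_succ', Nat.cast_add]
          ring

section Parareal

variable {𝕜 V : Type*} [NontriviallyNormedField 𝕜] [SeminormedAddCommGroup V] [NormedSpace 𝕜 V]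
  {F G : V →L[𝕜] V} {lam : ℕ → V} {lamk : ℕ → ℕ → V}

theorem parareal_error_succ (hexact : ∀ n, lam (n + 1) = F (lam n))
    (hrec : ∀ k n, lamk (k + 1) (n + 1) = G (lamk (k + 1) n) + F (lamk k n) - G (lamk k n))
    (k n : ℕ) :
    lamk (k + 1) (n + 1) - lam (n + 1) =
      G (lamk (k + 1) n - lam n) + (F - G) (lamk k n - lam n) := by
  rw [hrec, hexact]
  simp only [sub_apply, map_sub]
  abel

theorem norm_parareal_error_succ_le {ε : ℝ} (hFG : ‖F - G‖ ≤ ε) (hG : ‖G‖ ≤ 1)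
    (hexact : ∀ n, lam (n + 1) = F (lam n))
    (hrec : ∀ k n, lamk (k + 1) (n + 1) = G (lamk (k + 1) n) + F (lamk k n) - G (lamk k n))
    (k n : ℕ) :
    ‖lamk (k + 1) (n + 1) - lam (n + 1)‖ ≤
      ‖lamk (k + 1) n - lam n‖ + ε * ‖lamk k n - lam n‖ := by
  rw [parareal_error_succ hexact hrec]
  calc _ ≤ ‖G‖ * ‖lamk (k + 1) n - lam n‖ + ‖F - G‖ * ‖lamk k n - lam n‖ :=
        (norm_add_le _ _).trans (add_le_add (G.le_opNorm _) ((F - G).le_opNorm _))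
    _ ≤ 1 * ‖lamk (k + 1) n - lam n‖ + ε * ‖lamk k n - lam n‖ := by gcongr
    _ = _ := by rw [one_mul]

end Parareal

/-- Binomial convergence bound for parareal: if `‖F - G‖ ≤ ε` and `‖G‖ ≤ 1` then
`‖e_n^k‖ ≤ ε^k (n choose k) max_{0 ≤ m ≤ N} ‖e_m^0‖`. -/
theorem stmt8 {V : Type*} [NormedAddCommGroup V] [NormedSpace ℝ V]
    (F G : V →L[ℝ] V) (ε : ℝ) (hFG : ‖F - G‖ ≤ ε) (hG : ‖G‖ ≤ 1)
    (N : ℕ) (lam : ℕ → V) (lamk : ℕ → ℕ → V)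
    (hexact : ∀ n : ℕ, lam (n + 1) = F (lam n))
    (h0 : ∀ k : ℕ, lamk k 0 = lam 0)
    (hrec : ∀ k n : ℕ, lamk (k + 1) (n + 1) =
      G (lamk (k + 1) n) + F (lamk k n) - G (lamk k n)) :
    ∀ k n : ℕ, n ≤ N →
      ‖lamk k n - lam n‖ ≤ ε ^ k * (n.choose k) *
        (Finset.range (N + 1)).sup'
          (Finset.nonempty_range_iff.mpr (Nat.succ_ne_zero N))
          (fun m => ‖lamk 0 m - lam m‖) := by
  refine le_pow_mul_choose_mul_of_le_add ((norm_nonneg _).trans hFG) (fun k => ?_)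
    (fun n hn => ?_) (norm_parareal_error_succ_le hFG hG hexact hrec)
  · simp [h0]
  · exact Finset.le_sup' (fun m => ‖lamk 0 m - lam m‖) (Finset.mem_range.mpr (by omega))
end

section
/- If F is a contraction (‖F‖ ≤ 1), then the operator norm of 𝓕 on H^N (with the product inner product) is at most 2, and the norm of 𝓕^{-1} is at most N. -/
/-!
Write `𝓕 = 1 - S` with `S` the block shift `(S x)ₙ = F xₙ₋₁`. Since `F` is a contraction, `S` only
drops the last coordinate and contracts the others, so `‖S‖ ≤ 1` and `‖𝓕‖ ≤ 2`. Every row of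
`𝓕⁻¹` is a sum of contractions applied to the coordinates, so each coordinate of `𝓕⁻¹ x` has norm
at most `‖x‖₁ ≤ √N ‖x‖₂`, whence `‖𝓕⁻¹ x‖₂ ≤ √N · √N ‖x‖₂`.
-/

open Finset

section

variable {𝕜 E : Type*} [NontriviallyNormedField 𝕜] [SeminormedAddCommGroup E] [NormedSpace 𝕜 E]

theorem ContinuousLinearMap.norm_pow_apply_le_of_norm_le_one {F : E →L[𝕜] E} (hF : ‖F‖ ≤ 1)
    (k : ℕ) (u : E) : ‖(F ^ k) u‖ ≤ ‖u‖ := by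
  induction k with
  | zero => simp
  | succ k ih =>
    rw [pow_succ', mul_apply_eq_comp]
    exact (F.le_of_opNorm_le hF _).trans ((one_mul _).trans_le ih)

def blockShift {N : ℕ} (F : E →L[𝕜] E) (x : Fin N → E) : Fin N → E :=
  fun n => if 0 < (n : ℕ) then F (x ⟨(n : ℕ) - 1, (Nat.sub_le _ _).trans_lt n.isLt⟩) else 0

theorem Fin.sum_shift_le {N : ℕ} (f : Fin N → ℝ) (hf : 0 ≤ f) :
    ∑ n : Fin N, (if 0 < (n : ℕ) then f ⟨(n : ℕ) - 1, (Nat.sub_le _ _).trans_lt n.isLt⟩ else 0) ≤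
      ∑ n, f n := by
  cases N with
  | zero => simp
  | succ M =>
    rw [Fin.sum_univ_succ, Fin.sum_univ_castSucc (f := f)]
    simp only [coe_ofNat_eq_mod, Nat.zero_mod, lt_self_iff_false, ↓reduceIte, val_succ,
      lt_add_iff_pos_left, Order.lt_add_one_iff, _root_.zero_le, add_tsub_cancel_right, zero_add]
    exact le_add_of_nonneg_right (hf _)

theorem sum_norm_blockShift_sq_le {N : ℕ} {F : E →L[𝕜] E} (hF : ‖F‖ ≤ 1) (x : Fin N → E) :
    ∑ n, ‖blockShift F x n‖ ^ 2 ≤ ∑ n, ‖x n‖ ^ 2 := by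
  refine le_trans (sum_le_sum fun n _ => ?_) (Fin.sum_shift_le (fun n => ‖x n‖ ^ 2)
    fun n => sq_nonneg _)
  unfold blockShift
  split_ifs
  · gcongr
    exact (F.le_of_opNorm_le hF _).trans_eq (one_mul _)
  · simp

end

theorem sqrt_sum_norm_sub_sq_le {ι E : Type*} [Fintype ι] [SeminormedAddCommGroup E]
    (x y : ι → E) :
    √(∑ i, ‖x i - y i‖ ^ 2) ≤ √(∑ i, ‖x i‖ ^ 2) + √(∑ i, ‖y i‖ ^ 2) := by
  simpa [PiLp.norm_eq_of_L2] using norm_sub_le (WithLp.toLp 2 x) (WithLp.toLp 2 y)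

theorem sqrt_sum_norm_sq_le_card_mul {ι E : Type*} [Fintype ι] [SeminormedAddCommGroup E]
    (x y : ι → E) (hy : ∀ i, ‖y i‖ ≤ ∑ j, ‖x j‖) :
    √(∑ i, ‖y i‖ ^ 2) ≤ Fintype.card ι * √(∑ i, ‖x i‖ ^ 2) := by
  have hsq : ∑ i, ‖y i‖ ^ 2 ≤ (Fintype.card ι : ℝ) ^ 2 * ∑ i, ‖x i‖ ^ 2 :=
    calc ∑ i, ‖y i‖ ^ 2 ≤ ∑ _i : ι, (∑ j, ‖x j‖) ^ 2 :=
          sum_le_sum fun i _ => pow_le_pow_left₀ (norm_nonneg _) (hy i) 2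
      _ = Fintype.card ι * (∑ j, ‖x j‖) ^ 2 := by simp
      _ ≤ Fintype.card ι * (Fintype.card ι * ∑ j, ‖x j‖ ^ 2) := by
          gcongr
          simpa using sq_sum_le_card_mul_sum_sq (s := univ) (f := fun j => ‖x j‖)
      _ = (Fintype.card ι : ℝ) ^ 2 * ∑ i, ‖x i‖ ^ 2 := by ring
  simpa [Real.sqrt_mul', Real.sqrt_sq] using Real.sqrt_le_sqrt hsq

/-- If `‖F‖ ≤ 1` then, in the `ℓ²` product norm on `H^N`, the block bidiagonal
operator `𝓕` has norm at most `2` and its inverse (blocks `F^(i-j)`) has norm at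
most `N`. -/
theorem stmt13 {H : Type*} [NormedAddCommGroup H] [InnerProductSpace ℝ H]
    (N : ℕ) (F : H →L[ℝ] H) (hF : ‖F‖ ≤ 1) :
    (∀ x : Fin N → H,
        Real.sqrt (∑ n : Fin N,
          ‖x n - if h : 0 < (n : ℕ) then
              F (x ⟨(n : ℕ) - 1, by have := n.isLt; omega⟩) else 0‖ ^ 2) ≤
          2 * Real.sqrt (∑ n : Fin N, ‖x n‖ ^ 2)) ∧
      (∀ x : Fin N → H,
        Real.sqrt (∑ n : Fin N,
          ‖∑ j : Fin N, if (j : ℕ) ≤ (n : ℕ) then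
              (F ^ ((n : ℕ) - (j : ℕ))) (x j) else 0‖ ^ 2) ≤
          (N : ℝ) * Real.sqrt (∑ n : Fin N, ‖x n‖ ^ 2)) := by
  refine ⟨fun x => ?_, fun x => ?_⟩
  · have hS := Real.sqrt_le_sqrt (sum_norm_blockShift_sq_le hF x)
    calc _ ≤ √(∑ n, ‖x n‖ ^ 2) + √(∑ n, ‖blockShift F x n‖ ^ 2) :=
          sqrt_sum_norm_sub_sq_le x (blockShift F x)
      _ ≤ 2 * √(∑ n, ‖x n‖ ^ 2) := by linarith
  · have hrow : ∀ n : Fin N, ‖∑ j : Fin N, if (j : ℕ) ≤ (n : ℕ) then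
        (F ^ ((n : ℕ) - (j : ℕ))) (x j) else 0‖ ≤ ∑ j, ‖x j‖ := fun n =>
      (norm_sum_le _ _).trans <| sum_le_sum fun j _ => by
        split_ifs
        · exact F.norm_pow_apply_le_of_norm_le_one hF _ _
        · simp
    exact (sqrt_sum_norm_sq_le_card_mul x _ hrow).trans_eq (by rw [Fintype.card_fin])
end
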